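/- Let d ≥ 1 and n ≥ 1 be integers, k ∈ {1,…,d}, and for p ∈ ℝ^d define D̂(p) := ∑_{l=1}^d (1 - cos p_l). Let û : ([-π,π]^d)^n → ℂ be measurable with ∫_{([-π,π]^d)^n} |û|² ∏_{m=1}^n D̂(p_m)^{-1} dp < ∞, and define v : ([-π,π]^d)^{n-1} → ℂ by v(p_1,…,p_{n-1}) := ∫_{[-π,π]^d} (e^{-i q·e_k} - 1) D̂(q)^{-1} û(p_1,…,p_{n-1},q) dq. Then ∫_{([-π,π]^d)^{n-1}} |v|² ∏_{m=1}^{n-1} D̂(p_m)^{-1} dp ≤ (2(2π)^d/d) · ∫_{([-π,π]^d)^n} |û|² ∏_{m=1}^{n} D̂(p_m)^{-1} dp, with integrands defined to be 0 where a factor D̂ vanishes. -/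

import Mathlib

/-!
With `w := 1 / D̂`, `v(p)` pairs `û(p, ·)` with `c(q) = e^{-i q_k} - 1` in `L²(w dq)`, so
Cauchy–Schwarz gives `|v(p)|² ≤ (∫ |c|² w) · ∫ |û(p, ·)|² w`; multiply by `∏ w(p_m)` and integrate
(Fubini). Since `|c(q)|² = 2 (1 - cos q_k)` and `∫ (1 - cos q_k) / D̂` does not depend on `k`
(permute coordinates), summing over `k` gives `∫ |c|² w = (2 / d) ∫ D̂ / D̂ = 2 (2π)^d / d`, as `D̂`
vanishes only on a null set.
-/

open MeasureTheory Real
open scoped ENNReal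

section CauchySchwarz

variable {α : Type*} [MeasurableSpace α] {μ : Measure α}

theorem ENNReal.lintegral_mul_sq_le {f g : α → ℝ≥0∞} (hf : AEMeasurable f μ)
    (hg : AEMeasurable g μ) :
    (∫⁻ a, f a * g a ∂μ) ^ 2 ≤ (∫⁻ a, f a ^ 2 ∂μ) * ∫⁻ a, g a ^ 2 ∂μ := by
  have h := ENNReal.lintegral_mul_le_Lp_mul_Lq μ Real.HolderConjugate.two_two hf hg
  have hsq : ∀ x : ℝ≥0∞, (x ^ (1 / 2 : ℝ)) ^ 2 = x := fun x => by
    rw [← ENNReal.rpow_natCast, ← ENNReal.rpow_mul]; norm_num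
  simp only [Pi.mul_apply, ENNReal.rpow_two] at h
  calc (∫⁻ a, f a * g a ∂μ) ^ 2
      ≤ ((∫⁻ a, f a ^ 2 ∂μ) ^ (1 / 2 : ℝ) * (∫⁻ a, g a ^ 2 ∂μ) ^ (1 / 2 : ℝ)) ^ 2 := by
        gcongr
    _ = _ := by rw [mul_pow, hsq, hsq]

theorem ENNReal.lintegral_mul_mul_sq_le {f g w : α → ℝ≥0∞} (hf : AEMeasurable f μ)
    (hg : AEMeasurable g μ) (hw : AEMeasurable w μ) :
    (∫⁻ a, f a * w a * g a ∂μ) ^ 2 ≤ (∫⁻ a, f a ^ 2 * w a ∂μ) * ∫⁻ a, w a * g a ^ 2 ∂μ := by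
  have h := ENNReal.lintegral_mul_sq_le (μ := μ.withDensity w)
    (hf.mono_ac (withDensity_absolutelyContinuous μ w))
    (hg.mono_ac (withDensity_absolutelyContinuous μ w))
  rw [lintegral_withDensity_eq_lintegral_mul₀ hw (g := fun a => f a * g a) (hf.mul hg),
    lintegral_withDensity_eq_lintegral_mul₀ hw (g := fun a => f a ^ 2) (hf.pow_const 2),
    lintegral_withDensity_eq_lintegral_mul₀ hw (g := fun a => g a ^ 2) (hg.pow_const 2)] at h
  simp only [Pi.mul_apply] at h
  convert h using 3 <;> exact funext fun a => by ring

theorem enorm_integral_mul_ofReal_mul_sq_le {c f : α → ℂ} {W : α → ℝ} (hc : AEMeasurable c μ)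
    (hf : AEMeasurable f μ) (hW : AEMeasurable W μ) (hW₀ : ∀ a, 0 ≤ W a) :
    ‖∫ a, c a * (W a : ℂ) * f a ∂μ‖ₑ ^ 2 ≤
      (∫⁻ a, ‖c a‖ₑ ^ 2 * ENNReal.ofReal (W a) ∂μ) *
        ∫⁻ a, ENNReal.ofReal (W a) * ‖f a‖ₑ ^ 2 ∂μ :=
  calc ‖∫ a, c a * (W a : ℂ) * f a ∂μ‖ₑ ^ 2
      ≤ (∫⁻ a, ‖c a‖ₑ * ENNReal.ofReal (W a) * ‖f a‖ₑ ∂μ) ^ 2 := by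
        gcongr
        refine (enorm_integral_le_lintegral_enorm _).trans_eq (lintegral_congr fun a => ?_)
        rw [enorm_mul, enorm_mul, ← ofReal_norm (W a : ℂ), Complex.norm_real,
          Real.norm_of_nonneg (hW₀ a)]
    _ ≤ _ := ENNReal.lintegral_mul_mul_sq_le hc.enorm hf.enorm hW.ennreal_ofReal

end CauchySchwarz

section Pi

variable {α : Type*} [MeasurableSpace α]

theorem measurable_fin_snoc {n : ℕ} :
    Measurable fun x : (Fin n → α) × α => (Fin.snoc x.1 x.2 : Fin (n + 1) → α) := by
  refine measurable_pi_iff.2 fun i => ?_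
  cases i using Fin.lastCases with
  | last => simpa using measurable_snd
  | cast j => simpa using measurable_fst.eval (a := j)

variable (μ : Measure α) [SigmaFinite μ]

theorem MeasureTheory.lintegral_pi_fin_succ_snoc {n : ℕ} {F : (Fin (n + 1) → α) → ℝ≥0∞}
    (hF : Measurable F) :
    ∫⁻ p, F p ∂Measure.pi (fun _ => μ) =
      ∫⁻ r, ∫⁻ q, F (Fin.snoc r q) ∂μ ∂Measure.pi (fun _ => μ) := by
  rw [← ((measurePreserving_piFinSuccAbove (fun _ => μ) (Fin.last n)).symm _).lintegral_comp hF]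
  refine (lintegral_prod_symm' _ (hF.comp (MeasurableEquiv.measurable _))).trans ?_
  simp [MeasurableEquiv.piFinSuccAbove_symm_apply, Fin.snocEquiv]

theorem MeasureTheory.lintegral_pi_comp_perm {ι : Type*} [Fintype ι] (σ : Equiv.Perm ι)
    (F : (ι → α) → ℝ≥0∞) :
    ∫⁻ q, F (q ∘ σ) ∂Measure.pi (fun _ => μ) = ∫⁻ q, F q ∂Measure.pi (fun _ => μ) := by
  have h := (measurePreserving_piCongrLeft (fun _ : ι => μ) σ.symm).lintegral_comp_emb
    (MeasurableEquiv.measurableEmbedding _) F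
  convert h using 3 with q
  congr 1
  ext i
  simp [MeasurableEquiv.piCongrLeft, Equiv.piCongrLeft_apply]

end Pi

namespace LatticeLaplacian

variable {ι : Type*} [Fintype ι]

noncomputable def symbol (q : ι → ℝ) : ℝ := ∑ l, (1 - cos (q l))

noncomputable def brillouinMeasure (ι : Type*) [Fintype ι] : Measure (ι → ℝ) :=
  Measure.pi fun _ => volume.restrict (Set.Icc (-π) π)

instance : IsFiniteMeasure (brillouinMeasure ι) := by
  unfold brillouinMeasure; infer_instance

theorem one_sub_cos_nonneg (x : ℝ) : 0 ≤ 1 - cos x := sub_nonneg.2 (cos_le_one x)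

theorem symbol_nonneg (q : ι → ℝ) : 0 ≤ symbol q :=
  Finset.sum_nonneg fun l _ => one_sub_cos_nonneg (q l)

@[fun_prop]
theorem measurable_symbol : Measurable (symbol : (ι → ℝ) → ℝ) := by
  unfold symbol; fun_prop

theorem symbol_comp_perm (q : ι → ℝ) (σ : Equiv.Perm ι) : symbol (q ∘ σ) = symbol q :=
  Equiv.sum_comp σ fun l => 1 - cos (q l)

theorem volume_restrict_Icc_eq_brillouinMeasure :
    (volume : Measure (ι → ℝ)).restrict (Set.Icc (fun _ => -π) (fun _ => π)) =
      brillouinMeasure ι := by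
  rw [← Set.pi_univ_Icc, volume_pi, Measure.restrict_pi_pi]
  rfl

theorem volume_restrict_pi_Icc {κ : Type*} [Fintype κ] :
    (volume : Measure (κ → ι → ℝ)).restrict
        (Set.univ.pi fun _ => Set.Icc (fun _ => -π) (fun _ => π)) =
      Measure.pi fun _ => brillouinMeasure ι := by
  simp_rw [volume_pi (α := fun _ : κ => ι → ℝ), Measure.restrict_pi_pi,
    volume_restrict_Icc_eq_brillouinMeasure]

theorem brillouinMeasure_univ :
    brillouinMeasure ι Set.univ = ENNReal.ofReal ((2 * π) ^ Fintype.card ι) := by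
  rw [brillouinMeasure, Measure.pi_univ, ENNReal.ofReal_pow (by positivity)]
  simp [Real.volume_Icc, two_mul]

theorem ae_symbol_ne_zero [Nonempty ι] : ∀ᵐ q ∂brillouinMeasure ι, symbol q ≠ 0 := by
  obtain ⟨l⟩ := ‹Nonempty ι›
  have hcos : ∀ᵐ x : ℝ, cos x ≠ 1 := by
    have hcount : {x : ℝ | cos x = 1}.Countable := by
      rw [show {x : ℝ | cos x = 1} = Set.range fun n : ℤ => n * (2 * π) from
        Set.ext fun x => cos_eq_one_iff x]
      exact Set.countable_range _
    exact measure_eq_zero_iff_ae_notMem.1 (hcount.measure_zero _)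
  filter_upwards [Measure.tendsto_eval_ae_ae (i := l) (ae_restrict_of_ae hcos)] with q hq
  have hpos : 0 < 1 - cos (q l) := sub_pos.2 ((cos_le_one _).lt_of_ne hq)
  exact (hpos.trans_le (Finset.single_le_sum (fun m _ => one_sub_cos_nonneg (q m))
    (Finset.mem_univ l))).ne'

theorem lintegral_one_sub_cos_div_symbol_eq (k k' : ι) :
    ∫⁻ q, ENNReal.ofReal ((1 - cos (q k)) / symbol q) ∂brillouinMeasure ι =
      ∫⁻ q, ENNReal.ofReal ((1 - cos (q k')) / symbol q) ∂brillouinMeasure ι := by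
  classical
  rw [brillouinMeasure, ← lintegral_pi_comp_perm _ (Equiv.swap k k')]
  simp [symbol_comp_perm]

theorem sum_lintegral_one_sub_cos_div_symbol [Nonempty ι] :
    ∑ k, ∫⁻ q, ENNReal.ofReal ((1 - cos (q k)) / symbol q) ∂brillouinMeasure ι =
      ENNReal.ofReal ((2 * π) ^ Fintype.card ι) := by
  rw [← lintegral_finsetSum _ fun k _ => by fun_prop, ← brillouinMeasure_univ, ← lintegral_one]
  refine lintegral_congr_ae ?_
  filter_upwards [ae_symbol_ne_zero] with q hq
  rw [← ENNReal.ofReal_sum_of_nonneg fun k _ => div_nonneg (one_sub_cos_nonneg _) (symbol_nonneg q),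
    ← Finset.sum_div, ← symbol, div_self hq, ENNReal.ofReal_one]

theorem lintegral_one_sub_cos_div_symbol [Nonempty ι] (k : ι) :
    ∫⁻ q, ENNReal.ofReal ((1 - cos (q k)) / symbol q) ∂brillouinMeasure ι =
      ENNReal.ofReal ((2 * π) ^ Fintype.card ι / Fintype.card ι) := by
  have h := sum_lintegral_one_sub_cos_div_symbol (ι := ι)
  rw [Finset.sum_congr rfl fun k' _ => lintegral_one_sub_cos_div_symbol_eq k' k,
    Finset.sum_const, Finset.card_univ, nsmul_eq_mul] at h
  rw [ENNReal.ofReal_div_of_pos (by exact_mod_cast Fintype.card_pos), ENNReal.ofReal_natCast,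
    ← h, mul_comm, ENNReal.mul_div_cancel_right (by simp) (by simp)]

theorem enorm_exp_neg_I_mul_sub_one_sq (x : ℝ) :
    ‖Complex.exp (-(Complex.I * x)) - 1‖ₑ ^ 2 = ENNReal.ofReal (2 * (1 - cos x)) := by
  rw [← ofReal_norm, ← ENNReal.ofReal_pow (norm_nonneg _), Complex.sq_norm, Complex.normSq_apply]
  congr 1
  simp [Complex.exp_re, Complex.exp_im]
  nlinarith [sin_sq_add_cos_sq x]

theorem lintegral_enorm_exp_sub_one_sq_mul_inv_symbol [Nonempty ι] (k : ι) :
    ∫⁻ q, ‖Complex.exp (-(Complex.I * q k)) - 1‖ₑ ^ 2 * ENNReal.ofReal (symbol q)⁻¹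
        ∂brillouinMeasure ι =
      ENNReal.ofReal (2 * (2 * π) ^ Fintype.card ι / Fintype.card ι) := by
  have hpt : ∀ q : ι → ℝ,
      ‖Complex.exp (-(Complex.I * q k)) - 1‖ₑ ^ 2 * ENNReal.ofReal (symbol q)⁻¹ =
        2 * ENNReal.ofReal ((1 - cos (q k)) / symbol q) := fun q => by
    rw [enorm_exp_neg_I_mul_sub_one_sq,
      ← ENNReal.ofReal_mul (by linarith [one_sub_cos_nonneg (q k)]), mul_assoc, ENNReal.ofReal_mul zero_le_two, ENNReal.ofReal_ofNat, div_eq_mul_inv]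
  rw [lintegral_congr hpt, lintegral_const_mul _ (by fun_prop), lintegral_one_sub_cos_div_symbol,
    mul_div_assoc, ENNReal.ofReal_mul zero_le_two, ENNReal.ofReal_ofNat]

end LatticeLaplacian

open LatticeLaplacian

theorem stmt_10_general
    (d n : ℕ) (k : Fin d)
    (D : (Fin d → ℝ) → ℝ) (hD : ∀ p, D p = ∑ l, (1 - Real.cos (p l)))
    (u : (Fin (n + 1) → Fin d → ℝ) → ℂ) (hu : Measurable u)
    (v : (Fin n → Fin d → ℝ) → ℂ)
    (hv : ∀ p, v p = ∫ q in Set.Icc (fun _ : Fin d => -π) (fun _ : Fin d => π),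
      (Complex.exp (-(Complex.I * (q k))) - 1) * ((D q)⁻¹ : ℝ) * u (Fin.snoc p q)) :
    (∫⁻ p in Set.univ.pi
        (fun _ : Fin n => Set.Icc (fun _ : Fin d => -π) (fun _ : Fin d => π)),
      (‖v p‖₊ : ℝ≥0∞) ^ 2 * ∏ m, ENNReal.ofReal (D (p m))⁻¹)
      ≤ ENNReal.ofReal (2 * (2 * π) ^ d / d) *
        ∫⁻ p in Set.univ.pi
          (fun _ : Fin (n + 1) => Set.Icc (fun _ : Fin d => -π) (fun _ : Fin d => π)),
        (‖u p‖₊ : ℝ≥0∞) ^ 2 * ∏ m, ENNReal.ofReal (D (p m))⁻¹ := by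
  obtain rfl : D = symbol := funext hD
  have : Nonempty (Fin d) := ⟨k⟩
  simp only [volume_restrict_pi_Icc, volume_restrict_Icc_eq_brillouinMeasure,
    ← enorm_eq_nnnorm] at hv ⊢
  rw [lintegral_pi_fin_succ_snoc _ (by fun_prop),
    ← lintegral_const_mul' _ _ ENNReal.ofReal_ne_top]
  refine lintegral_mono fun r => ?_
  simp only [Fin.prod_univ_castSucc, Fin.snoc_castSucc, Fin.snoc_last]
  set W := ∏ m, ENNReal.ofReal (symbol (r m))⁻¹
  have hc : Measurable fun q : Fin d → ℝ => Complex.exp (-(Complex.I * q k)) - 1 := by fun_prop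
  have hur : Measurable fun q => u (Fin.snoc r q) :=
    hu.comp (measurable_fin_snoc.comp (measurable_const.prodMk measurable_id))
  have hCS := enorm_integral_mul_ofReal_mul_sq_le (μ := brillouinMeasure (Fin d))
    hc.aemeasurable hur.aemeasurable (by fun_prop : Measurable fun q => (symbol q)⁻¹).aemeasurable
    fun q => inv_nonneg.2 (symbol_nonneg q)
  rw [lintegral_enorm_exp_sub_one_sq_mul_inv_symbol, Fintype.card_fin, ← hv r] at hCS
  calc ‖v r‖ₑ ^ 2 * W
      ≤ ENNReal.ofReal (2 * (2 * π) ^ d / d) *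
          (∫⁻ q, ENNReal.ofReal (symbol q)⁻¹ * ‖u (Fin.snoc r q)‖ₑ ^ 2
            ∂brillouinMeasure (Fin d)) * W := by
        gcongr
    _ = _ := by
        rw [mul_assoc,
          ← lintegral_mul_const' _ _ (ENNReal.prod_ne_top fun _ _ => ENNReal.ofReal_ne_top)]
        congr 1
        exact lintegral_congr fun q => by ring

theorem stmt_10
    (d n : ℕ) (hd : 1 ≤ d) (k : Fin d)
    (D : (Fin d → ℝ) → ℝ) (hD : ∀ p, D p = ∑ l, (1 - Real.cos (p l)))
    (u : (Fin (n + 1) → Fin d → ℝ) → ℂ) (hu : Measurable u)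
    (hfin : (∫⁻ p in Set.univ.pi
        (fun _ : Fin (n + 1) => Set.Icc (fun _ : Fin d => -π) (fun _ : Fin d => π)),
      (‖u p‖₊ : ℝ≥0∞) ^ 2 * ∏ m, ENNReal.ofReal (D (p m))⁻¹) < ⊤)
    (v : (Fin n → Fin d → ℝ) → ℂ)
    (hv : ∀ p, v p = ∫ q in Set.Icc (fun _ : Fin d => -π) (fun _ : Fin d => π),
      (Complex.exp (-(Complex.I * (q k))) - 1) * ((D q)⁻¹ : ℝ) * u (Fin.snoc p q)) :
    (∫⁻ p in Set.univ.pi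
        (fun _ : Fin n => Set.Icc (fun _ : Fin d => -π) (fun _ : Fin d => π)),
      (‖v p‖₊ : ℝ≥0∞) ^ 2 * ∏ m, ENNReal.ofReal (D (p m))⁻¹)
      ≤ ENNReal.ofReal (2 * (2 * π) ^ d / d) *
        ∫⁻ p in Set.univ.pi
          (fun _ : Fin (n + 1) => Set.Icc (fun _ : Fin d => -π) (fun _ : Fin d => π)),
        (‖u p‖₊ : ℝ≥0∞) ^ 2 * ∏ m, ENNReal.ofReal (D (p m))⁻¹ :=
  stmt_10_general d n k D hD u hu v hv
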